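/- Fix N ≥ 1 and let θ_0, ..., θ_N be the OGM step-size sequence. Let h be the OGM coefficients defined by h_{i+1,k} = (1/θ_{i+1})·(2θ_k - sum_{j=k+1}^{i} h_{j,k}) for k < i and h_{i+1,i} = 1 + (2θ_i - 1)/θ_{i+1}. Then sum_{k=0}^{j-1} h_{j,k} = θ_j for j = 1,...,N-1, and sum_{k=0}^{N-1} h_{N,k} = (θ_N + 1)/2. -/

import Mathlib

/-!
Write `S_m = ∑_{k<m} h_{m,k}` for the row sums. Summing the defining recursion of row `i+1` over
`k` and exchanging the double sum `∑_{k<i} ∑_{j=k+1}^{i} h_{j,k} = ∑_{j=1}^{i} S_j` gives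
`S_{i+1} = 1 + (2θ_i - 1 + 2∑_{k<i} θ_k - ∑_{j=1}^{i} S_j) / θ_{i+1}`.
By strong induction `S_j = θ_j` for the earlier rows, and the telescoping identity
`∑_{k<i} θ_k = θ_i² - θ_i` collapses the numerator to `θ_i²`, so `S_{i+1} = 1 + θ_i² / θ_{i+1}`.
The two recursions for `θ` turn this into `θ_{i+1}` for `i + 1 < N` and into `(θ_N + 1)/2` for
`i + 1 = N`.
-/

noncomputable def tseq : ℕ → ℝ
  | 0 => 1
  | i + 1 => (1 + Real.sqrt (1 + 4 * (tseq i) ^ 2)) / 2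

noncomputable def θseq (N i : ℕ) : ℝ :=
  if i < N then tseq i else (1 + Real.sqrt (1 + 8 * (tseq (N - 1)) ^ 2)) / 2

open Finset

lemma tseq_pos (i : ℕ) : 0 < tseq i := by
  cases i with
  | zero => norm_num [tseq]
  | succ n => unfold tseq; positivity

lemma tseq_succ_sq (i : ℕ) : tseq (i + 1) ^ 2 = tseq (i + 1) + tseq i ^ 2 := by
  have hsqrt := Real.sq_sqrt (by positivity : (0 : ℝ) ≤ 1 + 4 * tseq i ^ 2)
  simp only [tseq]
  linear_combination hsqrt / 4

lemma sum_range_tseq (i : ℕ) : ∑ k ∈ range i, tseq k = tseq i ^ 2 - tseq i := by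
  induction i with
  | zero => norm_num [tseq]
  | succ n ih => rw [sum_range_succ, ih]; linarith [tseq_succ_sq n]

lemma sum_Ico_one_tseq (i : ℕ) : ∑ j ∈ Ico 1 (i + 1), tseq j = tseq i ^ 2 - 1 := by
  have hshift := sum_range_succ' tseq i
  rw [sum_range_tseq, show tseq 0 = 1 from rfl] at hshift
  rw [sum_Ico_eq_sum_range, Nat.add_sub_cancel]
  simp only [add_comm 1]
  linarith [tseq_succ_sq i]

lemma one_add_sq_div_tseq_succ (i : ℕ) : 1 + tseq i ^ 2 / tseq (i + 1) = tseq (i + 1) := by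
  have hpos := tseq_pos (i + 1)
  rw [eq_sub_of_add_eq' (tseq_succ_sq i).symm]
  field_simp
  ring

lemma θseq_of_lt {N i : ℕ} (hi : i < N) : θseq N i = tseq i := if_pos hi

lemma θseq_self_sq (N : ℕ) : θseq N N ^ 2 = θseq N N + 2 * tseq (N - 1) ^ 2 := by
  have hsqrt := Real.sq_sqrt (by positivity : (0 : ℝ) ≤ 1 + 8 * tseq (N - 1) ^ 2)
  simp only [θseq, lt_irrefl, if_false]
  linear_combination hsqrt / 4

lemma θseq_self_pos (N : ℕ) : 0 < θseq N N := by
  simp only [θseq, lt_irrefl, if_false]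
  positivity

lemma one_add_sq_div_θseq_self (N : ℕ) :
    1 + tseq (N - 1) ^ 2 / θseq N N = (θseq N N + 1) / 2 := by
  have hpos := θseq_self_pos N
  field_simp
  linear_combination -θseq_self_sq N

lemma sum_range_sum_Ico_comm {M : Type*} [AddCommMonoid M] (f : ℕ → ℕ → M) (i : ℕ) :
    ∑ k ∈ range i, ∑ j ∈ Ico (k + 1) (i + 1), f j k =
      ∑ j ∈ Ico 1 (i + 1), ∑ k ∈ range j, f j k :=
  sum_comm' fun k j => by simp only [mem_range, mem_Ico]; omega

lemma sum_range_succ_eq_of_recursion (θ : ℕ → ℝ) (h : ℕ → ℕ → ℝ) (i : ℕ)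
    (ha : ∀ k < i, h (i + 1) k =
      (1 / θ (i + 1)) * (2 * θ k - ∑ j ∈ Ico (k + 1) (i + 1), h j k))
    (hb : h (i + 1) i = 1 + (2 * θ i - 1) / θ (i + 1)) :
    ∑ k ∈ range (i + 1), h (i + 1) k =
      1 + (2 * θ i - 1 + ∑ k ∈ range i, 2 * θ k
        - ∑ j ∈ Ico 1 (i + 1), ∑ k ∈ range j, h j k) / θ (i + 1) := by
  rw [sum_range_succ, hb, sum_congr rfl fun k hk => ha k (mem_range.mp hk), ← mul_sum,
    sum_sub_distrib, sum_range_sum_Ico_comm]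
  ring

lemma sum_range_succ_eq_of_tseq (θ : ℕ → ℝ) (h : ℕ → ℕ → ℝ) (i : ℕ)
    (hθ : ∀ k ≤ i, θ k = tseq k)
    (ha : ∀ k < i, h (i + 1) k =
      (1 / θ (i + 1)) * (2 * θ k - ∑ j ∈ Ico (k + 1) (i + 1), h j k))
    (hb : h (i + 1) i = 1 + (2 * θ i - 1) / θ (i + 1))
    (hprev : ∀ j ∈ Ico 1 (i + 1), ∑ k ∈ range j, h j k = tseq j) :
    ∑ k ∈ range (i + 1), h (i + 1) k = 1 + tseq i ^ 2 / θ (i + 1) := by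
  have hθsum : ∑ k ∈ range i, 2 * θ k = 2 * (tseq i ^ 2 - tseq i) := by
    rw [← mul_sum, ← sum_range_tseq]
    exact congrArg _ (sum_congr rfl fun k hk => hθ k (mem_range.mp hk).le)
  rw [sum_range_succ_eq_of_recursion θ h i ha hb, hθsum, sum_congr rfl hprev,
    sum_Ico_one_tseq, hθ i le_rfl]
  ring

/-- Row sums of the OGM coefficients: `∑_{k<j} h_{j,k} = θ_j` for `1 ≤ j ≤ N-1`,
and `∑_{k<N} h_{N,k} = (θ_N + 1)/2`. -/
theorem stmt_8 (N : ℕ) (hN : 1 ≤ N) (h : ℕ → ℕ → ℝ)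
    (hO2a : ∀ i k, k < i → i + 1 ≤ N →
      h (i + 1) k = (1 / θseq N (i + 1)) *
        (2 * θseq N k - ∑ j ∈ Finset.Ico (k + 1) (i + 1), h j k))
    (hO2b : ∀ i, i + 1 ≤ N → h (i + 1) i = 1 + (2 * θseq N i - 1) / θseq N (i + 1)) :
    (∀ j, 1 ≤ j → j < N → ∑ k ∈ Finset.range j, h j k = θseq N j) ∧
    (∑ k ∈ Finset.range N, h N k = (θseq N N + 1) / 2) := by
  have hrow : ∀ i, i + 1 ≤ N → (∀ j ∈ Ico 1 (i + 1), ∑ k ∈ range j, h j k = tseq j) →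
      ∑ k ∈ range (i + 1), h (i + 1) k = 1 + tseq i ^ 2 / θseq N (i + 1) := fun i hi =>
    sum_range_succ_eq_of_tseq (θseq N) h i (fun k hk => θseq_of_lt (by omega))
      (fun k hk => hO2a i k hk hi) (hO2b i hi)
  have hearly : ∀ j, 1 ≤ j → j < N → ∑ k ∈ range j, h j k = tseq j := by
    intro j
    induction j using Nat.strong_induction_on with
    | _ j ih =>
      intro hj1 hjN
      obtain ⟨i, rfl⟩ : ∃ i, j = i + 1 := ⟨j - 1, by omega⟩
      rw [hrow i hjN.le fun j hj => ih j (by grind) (mem_Ico.mp hj).1 (by grind),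
        θseq_of_lt hjN, one_add_sq_div_tseq_succ]
  refine ⟨fun j hj1 hjN => (hearly j hj1 hjN).trans (θseq_of_lt hjN).symm, ?_⟩
  obtain ⟨i, rfl⟩ : ∃ i, N = i + 1 := ⟨N - 1, by omega⟩
  rw [hrow i le_rfl fun j hj => hearly j (mem_Ico.mp hj).1 (mem_Ico.mp hj).2]
  simpa using one_add_sq_div_θseq_self (i + 1)
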